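/- arXiv:1809.02314 — 2 statements merged into one kernel-verified Lean document; each statement's English description precedes it below -/
import Mathlib

section
/- (Surrogate sandwich for modular approximation.) Let s be a positive integer and 0 < m_1 ≤ M_1, 0 < m_s ≤ M_s. Suppose u is m_1-strongly concave and M_1-smooth on Ω_1, and m_s-strongly concave and M_s-smooth on Ω_s. Define f̃(Z) := Σ_{a ∈ Z} f({a}) for Z ⊆ V, g(X) := max_{Z ⊆ X, |Z| ≤ s} f(Z), and g̃(X) := max_{Z ⊆ X, |Z| ≤ s} f̃(Z). Then for every X ⊆ V: (m_1/M_s)·g̃(X) ≤ g(X) ≤ (M_1/m_s)·g̃(X). -/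
/-!
Write `g = ∇u(0)` and `g_Z` for its restriction to `Z`. Strong concavity (resp. smoothness)
on `Ω_k` squeezes `u(y) - u(0)` for `Z`-supported `y` between the quadratics
`⟪g_Z, y⟫ - (M/2)‖y‖²` and `⟪g_Z, y⟫ - (m/2)‖y‖²`, whose maxima over `y` are `‖g_Z‖²/(2M)`
and `‖g_Z‖²/(2m)`. Hence `‖g_Z‖²/(2M_s) ≤ f(Z) ≤ ‖g_Z‖²/(2m_s)` for `|Z| ≤ s`, and
`g_a²/(2M₁) ≤ f({a}) ≤ g_a²/(2m₁)`. Since `‖g_Z‖² = ∑_{a ∈ Z} g_a²` is modular, `f` and `f̃`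
agree up to the stated factors on every `Z`, and the factors pass through the maximum.
-/

open scoped RealInnerProductSpace

/-- The support of a vector, as a finset. -/
noncomputable def suppF {V : Type*} [Fintype V] [DecidableEq V]
    (w : EuclideanSpace ℝ V) : Finset V :=
  Finset.univ.filter fun a => w a ≠ 0

/-- The restriction `w_S` of a vector `w` to a set `S` of coordinates:
it agrees with `w` on `S` and is zero elsewhere. -/
noncomputable def restr {V : Type*} [Fintype V] [DecidableEq V]
    (w : EuclideanSpace ℝ V) (S : Finset V) : EuclideanSpace ℝ V :=
  WithLp.toLp 2 (fun a => if a ∈ S then w a else 0)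

/-- `gmax f s X = max_{Z ⊆ X, |Z| ≤ s} f Z` (the maximum is over a nonempty finite
collection since `Z = ∅` is always allowed). -/
noncomputable def gmax {V : Type*} [DecidableEq V] (f : Finset V → ℝ) (s : ℕ)
    (X : Finset V) : ℝ :=
  (X.powerset.filter fun Z => Z.card ≤ s).sup'
    ⟨∅, Finset.mem_filter.mpr ⟨Finset.empty_mem_powerset X, by simp⟩⟩ f

open Finset

section Quadratic

variable {E : Type*} [NormedAddCommGroup E] [InnerProductSpace ℝ E]

lemma inner_sub_half_mul_norm_sq_le {m : ℝ} (hm : 0 < m) (g y : E) :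
    ⟪g, y⟫ - m / 2 * ‖y‖ ^ 2 ≤ ‖g‖ ^ 2 / (2 * m) := by
  have h := norm_sub_sq_real g (m • y)
  rw [inner_smul_right, norm_smul, Real.norm_of_nonneg hm.le] at h
  have key : ‖g‖ ^ 2 / (2 * m) - (⟪g, y⟫ - m / 2 * ‖y‖ ^ 2) = ‖g - m • y‖ ^ 2 / (2 * m) := by
    rw [h]; field_simp; ring
  rw [← sub_nonneg, key]; positivity

lemma inner_inv_smul_sub_half_mul_norm_sq {m : ℝ} (hm : 0 < m) (g : E) :
    ⟪g, m⁻¹ • g⟫ - m / 2 * ‖m⁻¹ • g‖ ^ 2 = ‖g‖ ^ 2 / (2 * m) := by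
  rw [inner_smul_right, real_inner_self_eq_norm_sq, norm_smul, Real.norm_of_nonneg (by positivity)]
  field_simp; ring

end Quadratic

section Sparse

variable {V : Type*} [Fintype V] [DecidableEq V]

lemma suppF_neg (x : EuclideanSpace ℝ V) : suppF (-x) = suppF x := by
  simp [suppF]

lemma apply_eq_zero_of_notMem_suppF {x : EuclideanSpace ℝ V} {a : V} (h : a ∉ suppF x) :
    x a = 0 := by
  simpa [suppF] using h

lemma suppF_restr_subset (g : EuclideanSpace ℝ V) (Z : Finset V) : suppF (restr g Z) ⊆ Z := by
  intro a ha
  by_contra hZ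
  simp [suppF, restr, hZ] at ha

lemma suppF_smul_subset (c : ℝ) (x : EuclideanSpace ℝ V) : suppF (c • x) ⊆ suppF x := by
  intro a
  simp +contextual [suppF]

lemma inner_restr_of_suppF_subset (g : EuclideanSpace ℝ V) {Z : Finset V}
    {y : EuclideanSpace ℝ V} (hy : suppF y ⊆ Z) : ⟪restr g Z, y⟫ = ⟪g, y⟫ := by
  simp only [PiLp.inner_apply, restr]
  refine sum_congr rfl fun a _ => ?_
  by_cases ha : a ∈ Z
  · simp [ha]
  · simp [ha, apply_eq_zero_of_notMem_suppF fun h => ha (hy h)]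

lemma norm_restr_sq (g : EuclideanSpace ℝ V) (Z : Finset V) :
    ‖restr g Z‖ ^ 2 = ∑ a ∈ Z, g a ^ 2 := by
  simp [EuclideanSpace.real_norm_sq_eq, restr, ite_pow, sum_ite_mem]

/-- Strong concavity of `u` with modulus `m` on `Ω_k`. -/
def SparseStronglyConcave (u : EuclideanSpace ℝ V → ℝ) (m : ℝ) (k : ℕ) : Prop :=
  ∀ x y : EuclideanSpace ℝ V,
    (suppF x).card ≤ k → (suppF y).card ≤ k → (suppF (x - y)).card ≤ k →
    u y - u x - ⟪gradient u x, y - x⟫ ≤ -(m / 2) * ‖y - x‖ ^ 2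

/-- Smoothness of `u` with modulus `M` on `Ω_k`. -/
def SparseSmooth (u : EuclideanSpace ℝ V → ℝ) (M : ℝ) (k : ℕ) : Prop :=
  ∀ x y : EuclideanSpace ℝ V,
    (suppF x).card ≤ k → (suppF y).card ≤ k → (suppF (x - y)).card ≤ k →
    u y - u x - ⟪gradient u x, y - x⟫ ≥ -(M / 2) * ‖y - x‖ ^ 2

variable {u : EuclideanSpace ℝ V → ℝ} {k : ℕ} {Z : Finset V}

lemma pair_zero_of_suppF_subset {P : EuclideanSpace ℝ V → EuclideanSpace ℝ V → Prop}
    (h : ∀ x y : EuclideanSpace ℝ V,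
      (suppF x).card ≤ k → (suppF y).card ≤ k → (suppF (x - y)).card ≤ k → P x y)
    (hZ : Z.card ≤ k) {y : EuclideanSpace ℝ V} (hy : suppF y ⊆ Z) : P 0 y := by
  have hcard : (suppF y).card ≤ k := (card_le_card hy).trans hZ
  exact h 0 y (by simp [suppF]) hcard (by rwa [zero_sub, suppF_neg])

lemma SparseStronglyConcave.sub_le {m : ℝ} (h : SparseStronglyConcave u m k) (hZ : Z.card ≤ k)
    {y : EuclideanSpace ℝ V} (hy : suppF y ⊆ Z) :
    u y - u 0 ≤ ⟪gradient u 0, y⟫ - m / 2 * ‖y‖ ^ 2 := by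
  have := pair_zero_of_suppF_subset h hZ hy
  rw [sub_zero] at this
  linarith

lemma SparseSmooth.le_sub {M : ℝ} (h : SparseSmooth u M k) (hZ : Z.card ≤ k)
    {y : EuclideanSpace ℝ V} (hy : suppF y ⊆ Z) :
    ⟪gradient u 0, y⟫ - M / 2 * ‖y‖ ^ 2 ≤ u y - u 0 := by
  have := pair_zero_of_suppF_subset h hZ hy
  rw [sub_zero] at this
  linarith

lemma SparseStronglyConcave.sub_le_sum_sq {m : ℝ} (h : SparseStronglyConcave u m k) (hm : 0 < m)
    (hZ : Z.card ≤ k) {w : EuclideanSpace ℝ V} (hw : suppF w ⊆ Z) :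
    u w - u 0 ≤ (∑ a ∈ Z, gradient u 0 a ^ 2) / (2 * m) := by
  calc u w - u 0 ≤ ⟪gradient u 0, w⟫ - m / 2 * ‖w‖ ^ 2 := h.sub_le hZ hw
    _ = ⟪restr (gradient u 0) Z, w⟫ - m / 2 * ‖w‖ ^ 2 := by
      rw [inner_restr_of_suppF_subset _ hw]
    _ ≤ ‖restr (gradient u 0) Z‖ ^ 2 / (2 * m) := inner_sub_half_mul_norm_sq_le hm _ _
    _ = (∑ a ∈ Z, gradient u 0 a ^ 2) / (2 * m) := by rw [norm_restr_sq]

lemma SparseSmooth.sum_sq_le_sub {M : ℝ} (h : SparseSmooth u M k) (hM : 0 < M)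
    (hZ : Z.card ≤ k) {w : EuclideanSpace ℝ V}
    (hw : ∀ z : EuclideanSpace ℝ V, suppF z ⊆ Z → u z ≤ u w) :
    (∑ a ∈ Z, gradient u 0 a ^ 2) / (2 * M) ≤ u w - u 0 := by
  set gZ := restr (gradient u 0) Z
  have hy : suppF (M⁻¹ • gZ) ⊆ Z := (suppF_smul_subset _ _).trans (suppF_restr_subset _ _)
  calc (∑ a ∈ Z, gradient u 0 a ^ 2) / (2 * M) = ‖gZ‖ ^ 2 / (2 * M) := by rw [norm_restr_sq]
    _ = ⟪gZ, M⁻¹ • gZ⟫ - M / 2 * ‖M⁻¹ • gZ‖ ^ 2 := (inner_inv_smul_sub_half_mul_norm_sq hM _).symm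
    _ = ⟪gradient u 0, M⁻¹ • gZ⟫ - M / 2 * ‖M⁻¹ • gZ‖ ^ 2 := by
      rw [inner_restr_of_suppF_subset _ hy]
    _ ≤ u (M⁻¹ • gZ) - u 0 := h.le_sub hZ hy
    _ ≤ u w - u 0 := by linarith [hw _ hy]

end Sparse

section Gmax

variable {V : Type*} [DecidableEq V] {s : ℕ} {X : Finset V}

lemma gmax_mono {f f' : Finset V → ℝ} (h : ∀ Z : Finset V, Z.card ≤ s → f Z ≤ f' Z) :
    gmax f s X ≤ gmax f' s X :=
  sup'_mono_fun fun Z hZ => h Z (mem_filter.1 hZ).2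

lemma mul_gmax {c : ℝ} (hc : 0 ≤ c) (f : Finset V → ℝ) :
    c * gmax f s X = gmax (fun Z => c * f Z) s X :=
  mul₀_sup' hc f _ _

end Gmax

theorem stmt14_general {V : Type*} [Fintype V] [DecidableEq V]
    (s : ℕ) (m1 M1 ms Ms : ℝ)
    (hm1 : 0 < m1) (hm1M1 : m1 ≤ M1) (hms : 0 < ms) (hmsMs : ms ≤ Ms)
    (u : EuclideanSpace ℝ V → ℝ)
    (hconc1 : ∀ x y : EuclideanSpace ℝ V,
      (suppF x).card ≤ 1 → (suppF y).card ≤ 1 → (suppF (x - y)).card ≤ 1 →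
      u y - u x - ⟪gradient u x, y - x⟫ ≤ -(m1 / 2) * ‖y - x‖ ^ 2)
    (hsmooth1 : ∀ x y : EuclideanSpace ℝ V,
      (suppF x).card ≤ 1 → (suppF y).card ≤ 1 → (suppF (x - y)).card ≤ 1 →
      u y - u x - ⟪gradient u x, y - x⟫ ≥ -(M1 / 2) * ‖y - x‖ ^ 2)
    (hconcs : ∀ x y : EuclideanSpace ℝ V,
      (suppF x).card ≤ s → (suppF y).card ≤ s → (suppF (x - y)).card ≤ s →
      u y - u x - ⟪gradient u x, y - x⟫ ≤ -(ms / 2) * ‖y - x‖ ^ 2)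
    (hsmooths : ∀ x y : EuclideanSpace ℝ V,
      (suppF x).card ≤ s → (suppF y).card ≤ s → (suppF (x - y)).card ≤ s →
      u y - u x - ⟪gradient u x, y - x⟫ ≥ -(Ms / 2) * ‖y - x‖ ^ 2)
    (w : Finset V → EuclideanSpace ℝ V)
    (hw_supp : ∀ Z : Finset V, suppF (w Z) ⊆ Z)
    (hw_max : ∀ Z : Finset V, ∀ z : EuclideanSpace ℝ V, suppF z ⊆ Z → u z ≤ u (w Z))
    (X : Finset V) :
    (m1 / Ms) * gmax (fun Z => ∑ a ∈ Z, (u (w {a}) - u 0)) s X ≤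
        gmax (fun Z => u (w Z) - u 0) s X ∧
      gmax (fun Z => u (w Z) - u 0) s X ≤
        (M1 / ms) * gmax (fun Z => ∑ a ∈ Z, (u (w {a}) - u 0)) s X := by
  have hM1 : 0 < M1 := hm1.trans_le hm1M1
  have hMs : 0 < Ms := hms.trans_le hmsMs
  have hsingle_le (a : V) : u (w {a}) - u 0 ≤ gradient u 0 a ^ 2 / (2 * m1) := by
    simpa using SparseStronglyConcave.sub_le_sum_sq hconc1 hm1 (card_singleton a).le (hw_supp {a})
  have hsingle_ge (a : V) : gradient u 0 a ^ 2 / (2 * M1) ≤ u (w {a}) - u 0 := by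
    simpa using SparseSmooth.sum_sq_le_sub hsmooth1 hM1 (card_singleton a).le (hw_max {a})
  constructor
  · rw [mul_gmax (by positivity)]
    refine gmax_mono fun Z hZ => ?_
    calc m1 / Ms * ∑ a ∈ Z, (u (w {a}) - u 0)
        ≤ m1 / Ms * ∑ a ∈ Z, gradient u 0 a ^ 2 / (2 * m1) := by gcongr with a; exact hsingle_le a
      _ = (∑ a ∈ Z, gradient u 0 a ^ 2) / (2 * Ms) := by rw [← sum_div]; field_simp
      _ ≤ u (w Z) - u 0 := SparseSmooth.sum_sq_le_sub hsmooths hMs hZ (hw_max Z)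
  · rw [mul_gmax (by positivity)]
    refine gmax_mono fun Z hZ => ?_
    calc u (w Z) - u 0
        ≤ (∑ a ∈ Z, gradient u 0 a ^ 2) / (2 * ms) :=
          SparseStronglyConcave.sub_le_sum_sq hconcs hms hZ (hw_supp Z)
      _ = M1 / ms * ∑ a ∈ Z, gradient u 0 a ^ 2 / (2 * M1) := by rw [← sum_div]; field_simp
      _ ≤ M1 / ms * ∑ a ∈ Z, (u (w {a}) - u 0) := by gcongr with a; exact hsingle_ge a

/-- surrogate sandwich for modular approximation,
`(m₁/M_s)·g̃(X) ≤ g(X) ≤ (M₁/m_s)·g̃(X)`. -/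
theorem stmt14 {V : Type*} [Fintype V] [DecidableEq V]
    (s : ℕ) (hs : 0 < s) (m1 M1 ms Ms : ℝ)
    (hm1 : 0 < m1) (hm1M1 : m1 ≤ M1) (hms : 0 < ms) (hmsMs : ms ≤ Ms)
    (u : EuclideanSpace ℝ V → ℝ) (hu : Differentiable ℝ u)
    (hconc1 : ∀ x y : EuclideanSpace ℝ V,
      (suppF x).card ≤ 1 → (suppF y).card ≤ 1 → (suppF (x - y)).card ≤ 1 →
      u y - u x - ⟪gradient u x, y - x⟫ ≤ -(m1 / 2) * ‖y - x‖ ^ 2)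
    (hsmooth1 : ∀ x y : EuclideanSpace ℝ V,
      (suppF x).card ≤ 1 → (suppF y).card ≤ 1 → (suppF (x - y)).card ≤ 1 →
      u y - u x - ⟪gradient u x, y - x⟫ ≥ -(M1 / 2) * ‖y - x‖ ^ 2)
    (hconcs : ∀ x y : EuclideanSpace ℝ V,
      (suppF x).card ≤ s → (suppF y).card ≤ s → (suppF (x - y)).card ≤ s →
      u y - u x - ⟪gradient u x, y - x⟫ ≤ -(ms / 2) * ‖y - x‖ ^ 2)
    (hsmooths : ∀ x y : EuclideanSpace ℝ V,
      (suppF x).card ≤ s → (suppF y).card ≤ s → (suppF (x - y)).card ≤ s →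
      u y - u x - ⟪gradient u x, y - x⟫ ≥ -(Ms / 2) * ‖y - x‖ ^ 2)
    (w : Finset V → EuclideanSpace ℝ V)
    (hw_supp : ∀ Z : Finset V, suppF (w Z) ⊆ Z)
    (hw_max : ∀ Z : Finset V, ∀ z : EuclideanSpace ℝ V, suppF z ⊆ Z → u z ≤ u (w Z))
    (hw_grad : ∀ Z : Finset V, ∀ a ∈ Z, gradient u (w Z) a = 0)
    (X : Finset V) :
    (m1 / Ms) * gmax (fun Z => ∑ a ∈ Z, (u (w {a}) - u 0)) s X ≤
        gmax (fun Z => u (w Z) - u 0) s X ∧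
      gmax (fun Z => u (w Z) - u 0) s X ≤
        (M1 / ms) * gmax (fun Z => ∑ a ∈ Z, (u (w {a}) - u 0)) s X :=
  stmt14_general s m1 M1 ms Ms hm1 hm1M1 hms hmsMs u hconc1 hsmooth1 hconcs hsmooths w hw_supp
    hw_max X
end

section
/- (Per-step inequality for the online replacement gains.) Let s be a positive integer and 0 < m_{2s} ≤ M_{s,2}, and suppose u is m_{2s}-strongly concave on Ω_{2s} and M_{s,2}-smooth on Ω_{s,2}. For a ∈ V and Z ⊆ V with |Z| ≤ s, define the replacement gain Δ(a, Z) := f(Z ∪ {a}) − f(Z) if |Z| < s, and Δ(a, Z) := max{0, max_{a' ∈ Z} (f((Z \ {a'}) ∪ {a}) − f(Z))} if |Z| = s. Then for all Z, Z* ⊆ V with |Z| ≤ s and |Z*| ≤ s: Σ_{a ∈ Z*} Δ(a, Z) ≥ (m_{2s}/M_{s,2})·f(Z*) − (M_{s,2}/m_{2s})·f(Z). -/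
/-!
Let `x = w(Z)` and `g = ∇u(x)`, which vanishes on `Z`. Restricted strong concavity between `x`
and `w(Z*)` gives `f(Z*) - f(Z) ≤ ‖g_{Z*∖Z}‖² / 2m - (m/2)‖x_{Z∖Z*}‖²`, and between `x` and `0`
it gives `(m/2)‖x‖² ≤ f(Z)`. Smoothness along the two-coordinate move that adds `a ∉ Z` with
coefficient `g_a / M` and deletes `a'` shows that the swap gains at least
`g_a² / 2M - (M/2) x_{a'}²`; summing over `a ∈ Z* ∖ Z` (deleting nothing when `|Z| < s`) gives
`∑ Δ(a, Z) ≥ ‖g_{Z*∖Z}‖² / 2M - (M/2)‖x_{Z∖Z*}‖²`. Eliminating the two norms between these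
three inequalities yields the claim.
-/

open scoped RealInnerProductSpace

/-- The replacement gain `Δ(a, Z)` of adding atom `a` to support `Z` under the sparsity
bound `s`: if `|Z| < s` it is `f(Z ∪ {a}) - f(Z)`, and if `|Z| = s` it is
`max {0, max_{a' ∈ Z} (f((Z \ {a'}) ∪ {a}) - f(Z))}` (junk value `0` if `Z = ∅`). -/
noncomputable def repGain {V : Type*} [Fintype V] [DecidableEq V]
    (f : Finset V → ℝ) (s : ℕ) (a : V) (Z : Finset V) : ℝ :=
  if Z.card < s then f (insert a Z) - f Z
  else if hZ : Z.Nonempty then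
    max 0 (Z.sup' hZ fun a' => f (insert a (Z.erase a')) - f Z)
  else 0

open Finset

section Sparse

variable {V : Type*} [Fintype V]

lemma inner_eq_sum (x y : EuclideanSpace ℝ V) : ⟪x, y⟫ = ∑ b, x b * y b := by
  simp [PiLp.inner_apply, mul_comm]

variable [DecidableEq V]

/-- `RestrictedStrongConcave u m k` is `m`-strong concavity on `Ω_k`, and
`RestrictedSmooth u M k p` is `M`-smoothness on `Ω_{k,p}`. -/
def RestrictedStrongConcave (u : EuclideanSpace ℝ V → ℝ) (m : ℝ) (k : ℕ) : Prop :=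
  ∀ x y : EuclideanSpace ℝ V,
    (suppF x).card ≤ k → (suppF y).card ≤ k → (suppF (x - y)).card ≤ k →
    u y - u x - ⟪gradient u x, y - x⟫ ≤ -(m / 2) * ‖y - x‖ ^ 2

def RestrictedSmooth (u : EuclideanSpace ℝ V → ℝ) (M : ℝ) (k p : ℕ) : Prop :=
  ∀ x y : EuclideanSpace ℝ V,
    (suppF x).card ≤ k → (suppF y).card ≤ k → (suppF (x - y)).card ≤ p →
    u y - u x - ⟪gradient u x, y - x⟫ ≥ -(M / 2) * ‖y - x‖ ^ 2

lemma mem_suppF {x : EuclideanSpace ℝ V} {a : V} : a ∈ suppF x ↔ x a ≠ 0 := by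
  simp [suppF]

lemma apply_eq_zero_of_suppF_subset {x : EuclideanSpace ℝ V} {Z : Finset V}
    (hx : suppF x ⊆ Z) {b : V} (hb : b ∉ Z) : x b = 0 :=
  not_not.1 fun h => hb (hx (mem_suppF.2 h))

lemma suppF_subset_iff {x : EuclideanSpace ℝ V} {Z : Finset V} :
    suppF x ⊆ Z ↔ ∀ b ∉ Z, x b = 0 :=
  ⟨fun hx _ hb => apply_eq_zero_of_suppF_subset hx hb,
    fun h b hb => by_contra fun hbZ => mem_suppF.1 hb (h b hbZ)⟩

lemma inner_sub_half_mul_norm_sq_le_s19 {m : ℝ} (hm : 0 < m) {g x y : EuclideanSpace ℝ V}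
    {Z Z' : Finset V} (hx : suppF x ⊆ Z) (hy : suppF y ⊆ Z') (hg : ∀ b ∈ Z, g b = 0) :
    ⟪g, y - x⟫ - m / 2 * ‖y - x‖ ^ 2 ≤
      (∑ b ∈ Z' \ Z, g b ^ 2) / (2 * m) - m / 2 * ∑ b ∈ Z \ Z', x b ^ 2 := by
  have hpoint : ∀ b, g b * (y b - x b) - m / 2 * (y b - x b) ^ 2 ≤
      (if b ∈ Z' \ Z then g b ^ 2 / (2 * m) else 0) -
        (if b ∈ Z \ Z' then m / 2 * x b ^ 2 else 0) := by
    intro b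
    by_cases hbZ : b ∈ Z <;> by_cases hbZ' : b ∈ Z'
    · simp [hbZ, hbZ', hg b hbZ]; positivity
    · simp [hbZ, hbZ', hg b hbZ, apply_eq_zero_of_suppF_subset hy hbZ']
    · -- AM-GM: `g y - (m/2) y² ≤ g² / (2m)`
      rw [if_pos (mem_sdiff.2 ⟨hbZ', hbZ⟩), if_neg fun h => hbZ (mem_sdiff.1 h).1,
        apply_eq_zero_of_suppF_subset hx hbZ, sub_zero, sub_zero]
      have : 0 ≤ (g b - m * y b) ^ 2 / (2 * m) := by positivity
      linarith [show (g b - m * y b) ^ 2 / (2 * m) =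
        g b ^ 2 / (2 * m) - (g b * y b - m / 2 * y b ^ 2) by field_simp; ring]
    · simp [hbZ, hbZ', apply_eq_zero_of_suppF_subset hx hbZ,
        apply_eq_zero_of_suppF_subset hy hbZ']
  calc ⟪g, y - x⟫ - m / 2 * ‖y - x‖ ^ 2
      = ∑ b, (g b * (y b - x b) - m / 2 * (y b - x b) ^ 2) := by
        rw [inner_eq_sum, EuclideanSpace.real_norm_sq_eq, mul_sum, ← sum_sub_distrib]
        rfl
    _ ≤ _ := sum_le_sum fun b _ => hpoint b
    _ = _ := by
        rw [sum_sub_distrib, sum_ite_mem, sum_ite_mem, univ_inter, univ_inter, sum_div,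
          mul_sum]

lemma suppF_sub_subset_union {x y : EuclideanSpace ℝ V} {Z Z' : Finset V}
    (hx : suppF x ⊆ Z) (hy : suppF y ⊆ Z') : suppF (x - y) ⊆ Z ∪ Z' := by
  refine suppF_subset_iff.2 fun b hb => ?_
  rw [mem_union, not_or] at hb
  simp [apply_eq_zero_of_suppF_subset hx hb.1, apply_eq_zero_of_suppF_subset hy hb.2]

lemma suppF_add_single_sub_single_subset {x : EuclideanSpace ℝ V} {Z : Finset V}
    (hx : suppF x ⊆ Z) (a a' : V) (c : ℝ) :
    suppF (x + EuclideanSpace.single a c - EuclideanSpace.single a' (x a')) ⊆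
      insert a (Z.erase a') := by
  refine suppF_subset_iff.2 fun b hb => ?_
  rw [mem_insert, mem_erase, not_or, not_and_or, not_not] at hb
  obtain ⟨hba, rfl | hbZ⟩ := hb
  · simp [hba]
  · by_cases hba' : b = a'
    · subst hba'
      simp [hba]
    · simp [hba, hba', apply_eq_zero_of_suppF_subset hx hbZ]

variable {u : EuclideanSpace ℝ V → ℝ}

lemma RestrictedStrongConcave.sub_le {m : ℝ} {s : ℕ}
    (hconc : RestrictedStrongConcave u m (2 * s)) (hm : 0 < m)
    {x y : EuclideanSpace ℝ V} {Z Z' : Finset V} (hZ : Z.card ≤ s) (hZ' : Z'.card ≤ s)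
    (hx : suppF x ⊆ Z) (hy : suppF y ⊆ Z') (hg : ∀ b ∈ Z, gradient u x b = 0) :
    u y - u x ≤
      (∑ b ∈ Z' \ Z, gradient u x b ^ 2) / (2 * m) - m / 2 * ∑ b ∈ Z \ Z', x b ^ 2 := by
  have hxy : (suppF (x - y)).card ≤ 2 * s :=
    (card_le_card (suppF_sub_subset_union hx hy)).trans ((card_union_le _ _).trans (by omega))
  have := hconc x y ((card_le_card hx).trans (by omega)) ((card_le_card hy).trans (by omega)) hxy
  linarith [inner_sub_half_mul_norm_sq_le_s19 hm hx hy hg]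

lemma RestrictedSmooth.le_swap_gain {M : ℝ} {s : ℕ} (hsmooth : RestrictedSmooth u M s 2)
    (hM : 0 < M) {x : EuclideanSpace ℝ V} {Z : Finset V} (hZ : Z.card ≤ s)
    (hx : suppF x ⊆ Z) (hg : ∀ b ∈ Z, gradient u x b = 0) {a a' : V} (ha : a ∉ Z)
    (hcard : (insert a (Z.erase a')).card ≤ s) :
    gradient u x a ^ 2 / (2 * M) - M / 2 * x a' ^ 2 ≤
      u (x + EuclideanSpace.single a (gradient u x a / M) - EuclideanSpace.single a' (x a')) -
        u x := by
  set g := gradient u x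
  set c := g a / M
  set d := x a'
  set y := x + EuclideanSpace.single a c - EuclideanSpace.single a' d
  have hyx : y - x = EuclideanSpace.single a c - EuclideanSpace.single a' d := by
    simp only [y]; abel
  -- either `a'` is in `Z`, where `g` vanishes and `a' ≠ a`, or `d = 0`
  have hcross : g a' * d = 0 ∧
      ⟪EuclideanSpace.single a c, EuclideanSpace.single a' d⟫ = 0 := by
    by_cases ha' : a' ∈ Z
    · have hne : a' ≠ a := ne_of_mem_of_not_mem ha' ha
      simp [g, hg a' ha', EuclideanSpace.inner_single_left, hne]
    · simp [d, apply_eq_zero_of_suppF_subset hx ha', EuclideanSpace.inner_single_right]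
  have hinner : ⟪g, y - x⟫ = c * g a - d * g a' := by
    simp [hyx, inner_sub_right, EuclideanSpace.inner_single_right]
  have hnorm : ‖y - x‖ ^ 2 = c ^ 2 + d ^ 2 := by
    rw [hyx, norm_sub_sq_real, hcross.2]
    simp
  have hsupp : (suppF (x - y)).card ≤ 2 := by
    have : suppF (x - y) ⊆ {a, a'} := by
      refine suppF_subset_iff.2 fun b hb => ?_
      rw [mem_insert, mem_singleton, not_or] at hb
      rw [← neg_sub, PiLp.neg_apply, hyx]
      simp [hb.1, hb.2]
    exact (card_le_card this).trans card_le_two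
  have h := hsmooth x y ((card_le_card hx).trans hZ)
    ((card_le_card (suppF_add_single_sub_single_subset hx a a' c)).trans hcard) hsupp
  rw [hinner, hnorm] at h
  have hc : c * g a - M / 2 * c ^ 2 = g a ^ 2 / (2 * M) := by
    simp only [c]; field_simp; ring
  nlinarith [hcross.1]

end Sparse

section ReplacementGain

variable {V : Type*} [Fintype V] [DecidableEq V] {f : Finset V → ℝ} {s : ℕ} {a : V}
  {Z : Finset V}

lemma repGain_nonneg (hf : Monotone f) : 0 ≤ repGain f s a Z := by
  unfold repGain
  split_ifs
  · exact sub_nonneg.2 (hf (subset_insert a Z))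
  · exact le_max_left _ _
  · exact le_rfl

lemma repGain_of_card_lt (h : Z.card < s) : repGain f s a Z = f (insert a Z) - f Z := by
  rw [repGain, if_pos h]

lemma sub_le_repGain_of_mem (h : ¬Z.card < s) {a' : V} (ha' : a' ∈ Z) :
    f (insert a (Z.erase a')) - f Z ≤ repGain f s a Z := by
  rw [repGain, if_neg h, dif_pos ⟨a', ha'⟩]
  exact (le_sup' (fun b => f (insert a (Z.erase b)) - f Z) ha').trans (le_max_right _ _)

/-- When `|Z| = s`, each `a ∈ Z* \ Z` is swapped against the same `a' ∈ Z \ Z*` minimising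
`ψ`; there are at least as many candidates `a'` as atoms `a` because `|Z*| ≤ |Z|`. -/
lemma sum_sub_sum_le_sum_repGain (hf : Monotone f) {φ ψ : V → ℝ} (hψ : ∀ b, 0 ≤ ψ b)
    (hψZ : ∀ b ∉ Z, ψ b = 0) {Zstar : Finset V} (hZ : Z.card ≤ s)
    (hZstar : Zstar.card ≤ s)
    (hswap : ∀ a ∉ Z, ∀ a', (insert a (Z.erase a')).card ≤ s →
      φ a - ψ a' ≤ f (insert a (Z.erase a')) - f Z) :
    ∑ a ∈ Zstar \ Z, φ a - ∑ b ∈ Z \ Zstar, ψ b ≤ ∑ a ∈ Zstar, repGain f s a Z := by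
  refine le_trans ?_ (sum_le_sum_of_subset_of_nonneg (sdiff_subset : Zstar \ Z ⊆ Zstar)
    fun a _ _ => repGain_nonneg hf)
  have hψsum : 0 ≤ ∑ b ∈ Z \ Zstar, ψ b := sum_nonneg fun b _ => hψ b
  by_cases hlt : Z.card < s
  · have hpoint : ∀ a ∈ Zstar \ Z, φ a ≤ repGain f s a Z := fun a ha => by
      have haZ := (mem_sdiff.1 ha).2
      have h := hswap a haZ a (by
        rw [erase_eq_of_notMem haZ, card_insert_of_notMem haZ]; omega)
      rw [erase_eq_of_notMem haZ, hψZ a haZ] at h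
      rw [repGain_of_card_lt hlt]
      linarith
    linarith [sum_le_sum hpoint]
  rcases (Zstar \ Z).eq_empty_or_nonempty with hempty | hne
  · simp [hempty, hψsum]
  have hcard : (Zstar \ Z).card ≤ (Z \ Zstar).card :=
    card_sdiff_le_card_sdiff_iff.2 (by omega)
  obtain ⟨a₀, ha₀, hmin⟩ :=
    exists_min_image (Z \ Zstar) ψ (card_pos.1 ((card_pos.2 hne).trans_le hcard))
  have hpoint : ∀ a ∈ Zstar \ Z, φ a - ψ a₀ ≤ repGain f s a Z := fun a ha => by
    have ha₀Z := (mem_sdiff.1 ha₀).1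
    refine (hswap a (mem_sdiff.1 ha).2 a₀ ?_).trans (sub_le_repGain_of_mem hlt ha₀Z)
    grind [card_insert_le, card_erase_of_mem]
  calc ∑ a ∈ Zstar \ Z, φ a - ∑ b ∈ Z \ Zstar, ψ b
      ≤ ∑ a ∈ Zstar \ Z, φ a - (Zstar \ Z).card • ψ a₀ := by
        gcongr
        exact (nsmul_le_nsmul_left (hψ a₀) hcard).trans (card_nsmul_le_sum _ _ _ hmin)
    _ = ∑ a ∈ Zstar \ Z, (φ a - ψ a₀) := by rw [sum_sub_distrib, sum_const]
    _ ≤ _ := sum_le_sum hpoint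

end ReplacementGain

lemma le_of_concave_smooth_bounds {m M F F' G A P : ℝ} (hm : 0 < m) (hmM : m ≤ M)
    (hconc : F' - F ≤ G / (2 * m) - m / 2 * A) (hA : m / 2 * A ≤ F)
    (hsmooth : G / (2 * M) - M / 2 * A ≤ P) :
    m / M * F' - M / m * F ≤ P := by
  have hM : 0 < M := hm.trans_le hmM
  have hG : G ≤ 2 * M * P + M ^ 2 * A := by
    have := mul_le_mul_of_nonneg_left hsmooth (by positivity : (0 : ℝ) ≤ 2 * M)
    field_simp at this
    linarith
  have hF' : 2 * m * (F' - F) ≤ G - m ^ 2 * A := by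
    have := mul_le_mul_of_nonneg_left hconc (by positivity : (0 : ℝ) ≤ 2 * m)
    field_simp at this
    linarith
  have hAF : (M ^ 2 - m ^ 2) * (m / 2 * A) ≤ (M ^ 2 - m ^ 2) * F :=
    mul_le_mul_of_nonneg_left hA (by nlinarith)
  have key : m ^ 2 * F' - M ^ 2 * F ≤ m * M * P := by nlinarith
  rw [div_mul_eq_mul_div, div_mul_eq_mul_div, div_sub_div _ _ hM.ne' hm.ne',
    div_le_iff₀ (by positivity)]
  linarith

theorem stmt19_general {V : Type*} [Fintype V] [DecidableEq V]
    (s : ℕ) (m M : ℝ) (hm : 0 < m) (hmM : m ≤ M)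
    (u : EuclideanSpace ℝ V → ℝ)
    (hconc : ∀ x y : EuclideanSpace ℝ V,
      (suppF x).card ≤ 2 * s → (suppF y).card ≤ 2 * s → (suppF (x - y)).card ≤ 2 * s →
      u y - u x - ⟪gradient u x, y - x⟫ ≤ -(m / 2) * ‖y - x‖ ^ 2)
    (hsmooth : ∀ x y : EuclideanSpace ℝ V,
      (suppF x).card ≤ s → (suppF y).card ≤ s → (suppF (x - y)).card ≤ 2 →
      u y - u x - ⟪gradient u x, y - x⟫ ≥ -(M / 2) * ‖y - x‖ ^ 2)
    (w : Finset V → EuclideanSpace ℝ V)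
    (hw_supp : ∀ Z : Finset V, suppF (w Z) ⊆ Z)
    (hw_max : ∀ Z : Finset V, ∀ z : EuclideanSpace ℝ V, suppF z ⊆ Z → u z ≤ u (w Z))
    (hw_grad : ∀ Z : Finset V, ∀ a ∈ Z, gradient u (w Z) a = 0)
    (Z Zstar : Finset V) (hZ : Z.card ≤ s) (hZstar : Zstar.card ≤ s) :
    ∑ a ∈ Zstar, repGain (fun Y => u (w Y) - u 0) s a Z ≥
      (m / M) * (u (w Zstar) - u 0) - (M / m) * (u (w Z) - u 0) := by
  have hM : 0 < M := hm.trans_le hmM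
  have hgap := RestrictedStrongConcave.sub_le hconc hm hZ hZstar (hw_supp Z) (hw_supp Zstar)
    (hw_grad Z)
  have hnorm : m / 2 * ∑ b ∈ Z \ Zstar, w Z b ^ 2 ≤ u (w Z) - u 0 := by
    have h := RestrictedStrongConcave.sub_le hconc hm hZ (Z' := ∅) (Nat.zero_le s) (hw_supp Z)
      (suppF_subset_iff.2 fun _ _ => rfl : suppF 0 ⊆ ∅) (hw_grad Z)
    simp only [empty_sdiff, sum_empty, zero_div, sdiff_empty, zero_sub] at h
    have hsub : ∑ b ∈ Z \ Zstar, w Z b ^ 2 ≤ ∑ b ∈ Z, w Z b ^ 2 :=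
      sum_le_sum_of_subset_of_nonneg sdiff_subset fun b _ _ => sq_nonneg _
    linarith [mul_le_mul_of_nonneg_left hsub (by positivity : (0 : ℝ) ≤ m / 2)]
  have hf : Monotone fun Y => u (w Y) - u 0 := fun Y Y' hY =>
    sub_le_sub_right (hw_max Y' (w Y) ((hw_supp Y).trans hY)) _
  have hgain := sum_sub_sum_le_sum_repGain hf (φ := fun a => gradient u (w Z) a ^ 2 / (2 * M))
    (ψ := fun b => M / 2 * w Z b ^ 2) (fun b => by positivity)
    (fun b hb => by simp [apply_eq_zero_of_suppF_subset (hw_supp Z) hb]) hZ hZstar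
    fun a ha a' hcard => by
      have hmax := hw_max _ _ (suppF_add_single_sub_single_subset (hw_supp Z) a a'
        (gradient u (w Z) a / M))
      linarith [RestrictedSmooth.le_swap_gain hsmooth hM hZ (hw_supp Z) (hw_grad Z) ha hcard]
  rw [← sum_div, ← mul_sum] at hgain
  exact le_of_concave_smooth_bounds hm hmM (by linarith) hnorm hgain

/-- per-step inequality for the online replacement gains,
`∑_{a ∈ Z*} Δ(a, Z) ≥ (m_{2s}/M_{s,2})·f(Z*) - (M_{s,2}/m_{2s})·f(Z)`. -/
theorem stmt19 {V : Type*} [Fintype V] [DecidableEq V]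
    (s : ℕ) (hs : 0 < s) (m M : ℝ) (hm : 0 < m) (hmM : m ≤ M)
    (u : EuclideanSpace ℝ V → ℝ) (hu : Differentiable ℝ u)
    (hconc : ∀ x y : EuclideanSpace ℝ V,
      (suppF x).card ≤ 2 * s → (suppF y).card ≤ 2 * s → (suppF (x - y)).card ≤ 2 * s →
      u y - u x - ⟪gradient u x, y - x⟫ ≤ -(m / 2) * ‖y - x‖ ^ 2)
    (hsmooth : ∀ x y : EuclideanSpace ℝ V,
      (suppF x).card ≤ s → (suppF y).card ≤ s → (suppF (x - y)).card ≤ 2 →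
      u y - u x - ⟪gradient u x, y - x⟫ ≥ -(M / 2) * ‖y - x‖ ^ 2)
    (w : Finset V → EuclideanSpace ℝ V)
    (hw_supp : ∀ Z : Finset V, suppF (w Z) ⊆ Z)
    (hw_max : ∀ Z : Finset V, ∀ z : EuclideanSpace ℝ V, suppF z ⊆ Z → u z ≤ u (w Z))
    (hw_grad : ∀ Z : Finset V, ∀ a ∈ Z, gradient u (w Z) a = 0)
    (Z Zstar : Finset V) (hZ : Z.card ≤ s) (hZstar : Zstar.card ≤ s) :
    ∑ a ∈ Zstar, repGain (fun Y => u (w Y) - u 0) s a Z ≥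
      (m / M) * (u (w Zstar) - u 0) - (M / m) * (u (w Z) - u 0) :=
  stmt19_general s m M hm hmM u hconc hsmooth w hw_supp hw_max hw_grad Z Zstar hZ hZstar
end
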